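/- Let m₁, m₂ be distinct nonzero integers, let r be a positive integer, and let b be an integer coprime to r. Let q₁, q₂ be squarefree positive integers and let q₃ be any positive integer. Then |Σ e(m₁a₁/q₁ + m₂a₂/q₂)| ≤ |m₁ · m₂ · (m₁ - m₂)| · τ(r·lcm(q₁,q₂))³, where the sum is over pairs (a₁, a₂) with a₁ ∈ {1,...,q₁} coprime to q₁, a₂ ∈ {1,...,q₂} coprime to q₂, and denom(a₁/q₁ + a₂/q₂ - b/r) = q₃. -/

import Mathlib

/-- `e(θ) = exp(2πiθ)`. -/
noncomputable def e (θ : ℝ) : ℂ := Complex.exp (2 * Real.pi * Complex.I * θ)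

/-!
Put `x(a) = a₁/q₁ + a₂/q₂ - b/r`, whose denominator divides `Q = r · lcm(q₁, q₂)`. Möbius
inversion over the divisors `t` of `q₃`, combined with the orthogonality of `k ↦ e(k t x)` over
`k < Q`, detects the condition `den x(a) = q₃`; the sum over `a` then factors as a root of unity
times the Ramanujan sums `c_{q₁}(m₁ + kt) c_{q₂}(m₂ + kt)`. Since `|c_q(n)| ≤ ∑_{v ∣ (q, n)} v`,
what remains is to count the `k < Q` with `v₁ ∣ m₁ + kt` and `v₂ ∣ m₂ + kt`: they lie in a single
class modulo `lcm(f₁, f₂)`, where `fᵢ = vᵢ / gcd(vᵢ, t)`, and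
`v₁ v₂ / lcm(f₁, f₂) = gcd(v₁, t) gcd(v₂, t) gcd(f₁, f₂)`, whose three factors divide `m₁`, `m₂`
and `m₁ - m₂`. Finally `q₁`, `q₂` and `q₃` all divide `r · lcm(q₁, q₂)`.
-/

open Finset ArithmeticFunction
open scoped ArithmeticFunction.Moebius

lemma e_add (x y : ℝ) : e (x + y) = e x * e y := by
  rw [e, e, e, ← Complex.exp_add]
  push_cast
  ring_nf

lemma e_intCast (n : ℤ) : e n = 1 := by
  simpa [e, mul_comm] using Complex.exp_int_mul_two_pi_mul_I n

lemma e_zero : e 0 = 1 := by simpa using e_intCast 0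

lemma e_natCast_mul (k : ℕ) (θ : ℝ) : e (k * θ) = e θ ^ k := by
  rw [e, e, ← Complex.exp_nat_mul]
  push_cast
  ring_nf

lemma norm_e (θ : ℝ) : ‖e θ‖ = 1 := by
  simp [e, Complex.norm_exp]

lemma e_ratCast_eq_one_iff (y : ℚ) : e y = 1 ↔ y.den = 1 := by
  rw [e, Complex.exp_eq_one_iff, Rat.den_eq_one_iff]
  constructor
  · rintro ⟨n, hn⟩
    have hy : ((y : ℝ) : ℂ) = (n : ℂ) :=
      mul_left_cancel₀ Complex.two_pi_I_ne_zero (by rw [hn]; ring)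
    have hy' : y = n := by exact_mod_cast hy
    rw [hy', Rat.num_intCast]
  · intro hy
    refine ⟨y.num, ?_⟩
    rw [show (y : ℝ) = (y.num : ℝ) by exact_mod_cast hy.symm]
    push_cast
    ring

lemma den_dvd_iff_den_natCast_mul_eq_one (x : ℚ) (t : ℕ) : x.den ∣ t ↔ ((t : ℚ) * x).den = 1 := by
  have hx : (t : ℚ) * x = ((t * x.num : ℤ) : ℚ) / ((x.den : ℤ) : ℚ) := by
    nth_rewrite 1 [← Rat.num_div_den x]
    push_cast
    ring
  rw [hx, Rat.den_div_intCast_eq_one_iff _ _ (by positivity)]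
  constructor
  · exact fun h => (Int.natCast_dvd_natCast.mpr h).mul_right _
  · intro h
    have h' : x.den ∣ t * x.num.natAbs := by
      simpa [Int.natAbs_mul] using Int.natAbs_dvd_natAbs.mpr h
    exact x.reduced.symm.dvd_of_dvd_mul_right h'

lemma den_intCast_div_natCast_dvd (n : ℤ) (N : ℕ) : ((n : ℚ) / N).den ∣ N := by
  simpa [Rat.divInt_eq_div] using Int.natCast_dvd_natCast.mp (Rat.den_dvd n N)

lemma den_add_div_sub_div_dvd (a₁ a₂ q₁ q₂ r : ℕ) (b : ℤ) :
    (a₁ / q₁ + a₂ / q₂ - b / r : ℚ).den ∣ r * Nat.lcm q₁ q₂ := by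
  have h₁ : (a₁ / q₁ : ℚ).den ∣ q₁ := by simpa using den_intCast_div_natCast_dvd a₁ q₁
  have h₂ : (a₂ / q₂ : ℚ).den ∣ q₂ := by simpa using den_intCast_div_natCast_dvd a₂ q₂
  refine (Rat.sub_den_dvd_lcm _ _).trans (Nat.lcm_dvd ((Rat.add_den_dvd_lcm _ _).trans ?_) ?_)
  · exact (Nat.lcm_dvd (h₁.trans (Nat.dvd_lcm_left q₁ q₂))
      (h₂.trans (Nat.dvd_lcm_right q₁ q₂))).trans (dvd_mul_left _ _)
  · exact (den_intCast_div_natCast_dvd b r).trans (dvd_mul_right _ _)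

lemma sum_range_pow_of_pow_eq_one {K : Type*} [DivisionRing K] [DecidableEq K] {z : K} {N : ℕ}
    (hz : z ^ N = 1) :
    ∑ k ∈ range N, z ^ k = if z = 1 then (N : K) else 0 := by
  split_ifs with h
  · simp [h]
  · rw [geom_sum_eq h, hz, sub_self, zero_div]

lemma sum_range_e_mul_ratCast {N : ℕ} {y : ℚ} (hy : y.den ∣ N) :
    ∑ k ∈ range N, e (k * y) = if y.den = 1 then (N : ℂ) else 0 := by
  obtain ⟨n, hn⟩ : ∃ n : ℤ, (n : ℚ) = N * y :=
    ⟨_, (Rat.den_eq_one_iff _).mp ((den_dvd_iff_den_natCast_mul_eq_one y N).mp hy)⟩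
  have hN : e y ^ N = 1 := by
    rw [← e_natCast_mul, ← e_intCast n]
    congr 1
    exact_mod_cast hn.symm
  simp_rw [e_natCast_mul]
  rw [sum_range_pow_of_pow_eq_one hN]
  exact if_congr (e_ratCast_eq_one_iff y) rfl rfl

lemma sum_range_e_intCast_mul_div {N : ℕ} (hN : N ≠ 0) (n : ℤ) :
    ∑ j ∈ range N, e (n * j / N) = if (N : ℤ) ∣ n then (N : ℂ) else 0 := by
  have h := sum_range_e_mul_ratCast (den_intCast_div_natCast_dvd n N)
  push_cast at h
  have hiff : ((n : ℚ) / N).den = 1 ↔ (N : ℤ) ∣ n := by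
    exact_mod_cast Rat.den_div_intCast_eq_one_iff n N (by exact_mod_cast hN)
  simp only [hiff] at h
  rw [← h]
  exact sum_congr rfl fun j _ => by ring_nf

lemma sum_divisors_moebius_div_mul_ite_dvd {R : Type*} [Ring R] {n : ℕ} (hn : 0 < n) (D : ℕ) :
    ∑ t ∈ n.divisors, (μ (n / t) : R) * (if D ∣ t then 1 else 0) = if n = D then 1 else 0 := by
  have hinv := (sum_eq_iff_sum_mul_moebius_eq (R := R) (f := fun i => if i = D then 1 else 0)
    (g := fun m => if D ∣ m then 1 else 0)).mp (fun m hm => by simp [hm.ne']) n hn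
  rw [← hinv, Nat.sum_divisorsAntidiagonal' (f := fun a b => (μ a : R) * if D ∣ b then 1 else 0)]

lemma sum_divisors_filter_dvd_moebius {R : Type*} [Ring R] {q : ℕ} (hq : q ≠ 0) (a : ℕ) :
    ∑ d ∈ q.divisors with d ∣ a, (μ d : R) = if Nat.gcd a q = 1 then 1 else 0 := by
  have hfilter : {d ∈ q.divisors | d ∣ a} = (Nat.gcd a q).divisors := by
    rw [← Nat.divisors_filter_dvd_of_dvd hq (Nat.gcd_dvd_right a q)]
    exact filter_congr fun d hd => by
      rw [Nat.dvd_gcd_iff, and_iff_left (Nat.dvd_of_mem_divisors hd)]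
  simp_rw [hfilter, ← intCoe_apply, ← coe_mul_zeta_apply, coe_moebius_mul_coe_zeta, one_apply]

lemma norm_moebius_le_one (n : ℕ) : ‖(μ n : ℂ)‖ ≤ 1 := by
  rw [Complex.norm_intCast]
  exact_mod_cast abs_moebius_le_one

lemma ite_den_eq_eq_sum_divisors {N n : ℕ} (hN : N ≠ 0) (hn : 0 < n) {x : ℚ} (hx : x.den ∣ N) :
    (if x.den = n then 1 else 0 : ℂ) =
      (N : ℂ)⁻¹ * ∑ t ∈ n.divisors, (μ (n / t) : ℂ) * ∑ k ∈ range N, e ((k * t : ℤ) * (x : ℝ)) := by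
  have horth (t : ℕ) :
      ∑ k ∈ range N, e ((k * t : ℤ) * (x : ℝ)) = N * if x.den ∣ t then 1 else 0 := by
    have hy : ((t : ℚ) * x).den ∣ N := (Rat.mul_den_dvd _ _).trans (by simpa using hx)
    have := sum_range_e_mul_ratCast hy
    push_cast at this ⊢
    simp_rw [← mul_assoc] at this
    rw [this]
    simp only [← den_dvd_iff_den_natCast_mul_eq_one, mul_ite, mul_one, mul_zero]
  simp_rw [horth, mul_left_comm _ (N : ℂ), ← mul_sum, sum_divisors_moebius_div_mul_ite_dvd hn]
  rw [inv_mul_cancel_left₀ (by exact_mod_cast hN), eq_comm]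
  exact if_congr eq_comm rfl rfl

lemma sum_filter_den_eq {α : Type*} (A : Finset α) (x : α → ℚ) (w : α → ℂ) {N n : ℕ}
    (hN : N ≠ 0) (hn : 0 < n) (hx : ∀ a ∈ A, (x a).den ∣ N) :
    ∑ a ∈ A with (x a).den = n, w a =
      (N : ℂ)⁻¹ * ∑ t ∈ n.divisors, (μ (n / t) : ℂ) *
        ∑ k ∈ range N, ∑ a ∈ A, w a * e ((k * t : ℤ) * (x a : ℝ)) := by
  rw [sum_filter]
  calc ∑ a ∈ A, (if (x a).den = n then w a else 0)
      = ∑ a ∈ A, w a * ((N : ℂ)⁻¹ * ∑ t ∈ n.divisors, (μ (n / t) : ℂ) *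
          ∑ k ∈ range N, e ((k * t : ℤ) * (x a : ℝ))) :=
        sum_congr rfl fun a ha => by
          rw [← ite_den_eq_eq_sum_divisors hN hn (hx a ha), mul_ite, mul_one, mul_zero]
    _ = _ := by
        simp_rw [mul_sum, sum_comm (s := A), mul_left_comm (w _)]

lemma sum_Icc_one_eq_sum_range {M : Type*} [AddCommMonoid M] [IsRightCancelAdd M] (f : ℕ → M)
    {n : ℕ} (h : f n = f 0) :
    ∑ k ∈ Icc 1 n, f k = ∑ k ∈ range n, f k := by
  have hshift : ∑ k ∈ Icc 1 n, f k = ∑ k ∈ range n, f (k + 1) := by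
    rw [← Finset.Ico_add_one_right_eq_Icc, sum_Ico_eq_sum_range]
    simp [add_comm]
  rw [hshift]
  apply add_right_cancel (b := f 0)
  rw [← sum_range_succ', sum_range_succ, h]

lemma sum_range_filter_dvd {M : Type*} [AddCommMonoid M] (f : ℕ → M) {d q : ℕ} (hd : 0 < d)
    (hdq : d ∣ q) :
    ∑ a ∈ range q with d ∣ a, f a = ∑ j ∈ range (q / d), f (d * j) := by
  obtain ⟨c, rfl⟩ := hdq
  rw [Nat.mul_div_cancel_left c hd,
    ← sum_image (g := (d * ·)) fun _ _ _ _ h => Nat.eq_of_mul_eq_mul_left hd h]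
  congr 1
  ext a
  simp only [mem_filter, mem_range, mem_image]
  constructor
  · rintro ⟨ha, j, rfl⟩
    exact ⟨j, Nat.lt_of_mul_lt_mul_left ha, rfl⟩
  · rintro ⟨j, hj, rfl⟩
    exact ⟨Nat.mul_lt_mul_of_pos_left hj hd, dvd_mul_right d j⟩

def reducedResidues (q : ℕ) : Finset ℕ := {a ∈ Icc 1 q | Nat.gcd a q = 1}

noncomputable def ramanujanSum (q : ℕ) (n : ℤ) : ℂ := ∑ a ∈ reducedResidues q, e (n * a / q)

lemma ramanujanSum_eq {q : ℕ} (hq : q ≠ 0) (n : ℤ) :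
    ramanujanSum q n = ∑ v ∈ q.divisors with ((v : ℕ) : ℤ) ∣ n, (μ (q / v) : ℂ) * v := by
  have hrange : ramanujanSum q n = ∑ a ∈ range q, if Nat.gcd a q = 1 then e (n * a / q) else 0 := by
    rw [ramanujanSum, reducedResidues, sum_filter]
    refine sum_Icc_one_eq_sum_range _ ?_
    have hq' : (q : ℝ) ≠ 0 := by exact_mod_cast hq
    simp only [Nat.gcd_self, Nat.gcd_zero_left, CharP.cast_eq_zero, mul_zero, zero_div,
      mul_div_cancel_right₀ _ hq', e_intCast, e_zero]
  have hsieve (d : ℕ) (hd : d ∈ q.divisors) :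
      ∑ a ∈ range q with d ∣ a, e (n * a / q) =
        if ((q / d : ℕ) : ℤ) ∣ n then ((q / d : ℕ) : ℂ) else 0 := by
    have hd0 : 0 < d := Nat.pos_of_mem_divisors hd
    have hdq : d ∣ q := Nat.dvd_of_mem_divisors hd
    rw [sum_range_filter_dvd _ hd0 hdq,
      ← sum_range_e_intCast_mul_div ((Nat.div_ne_zero_iff_of_dvd hdq).mpr ⟨hq, hd0.ne'⟩)]
    refine sum_congr rfl fun j _ => congrArg e ?_
    rw [Nat.cast_div hdq (by exact_mod_cast hd0.ne')]
    have : (d : ℝ) ≠ 0 := by exact_mod_cast hd0.ne'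
    push_cast
    field_simp
  calc ramanujanSum q n
      = ∑ a ∈ range q, (∑ d ∈ q.divisors with d ∣ a, (μ d : ℂ)) * e (n * a / q) := by
        simp_rw [hrange, sum_divisors_filter_dvd_moebius hq, ite_mul, one_mul, zero_mul]
    _ = ∑ d ∈ q.divisors, (μ d : ℂ) * ∑ a ∈ range q with d ∣ a, e (n * a / q) := by
        simp_rw [sum_filter, sum_mul, mul_sum, ite_mul, zero_mul, mul_ite, mul_zero]
        rw [sum_comm]
    _ = ∑ d ∈ q.divisors, (μ d : ℂ) * if ((q / d : ℕ) : ℤ) ∣ n then ((q / d : ℕ) : ℂ) else 0 :=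
        sum_congr rfl fun d hd => by rw [hsieve d hd]
    _ = _ := by
        rw [← Nat.sum_div_divisors, sum_filter]
        refine sum_congr rfl fun v hv => ?_
        rw [Nat.div_div_self (Nat.dvd_of_mem_divisors hv) hq, mul_ite, mul_zero]

lemma norm_ramanujanSum_le {q : ℕ} (hq : q ≠ 0) (n : ℤ) :
    ‖ramanujanSum q n‖ ≤ ∑ v ∈ q.divisors with ((v : ℕ) : ℤ) ∣ n, (v : ℝ) := by
  rw [ramanujanSum_eq hq]
  refine (norm_sum_le _ _).trans (sum_le_sum fun v _ => ?_)
  rw [norm_mul, Complex.norm_natCast]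
  exact mul_le_of_le_one_left (Nat.cast_nonneg v) (norm_moebius_le_one _)

lemma sum_product_e_mul_e (q₁ q₂ r : ℕ) (m₁ m₂ b s : ℤ) :
    ∑ a ∈ reducedResidues q₁ ×ˢ reducedResidues q₂,
        e (m₁ * a.1 / q₁ + m₂ * a.2 / q₂) * e (s * ((a.1 / q₁ + a.2 / q₂ - b / r : ℚ) : ℝ)) =
      e (-(s * b / r)) * (ramanujanSum q₁ (m₁ + s) * ramanujanSum q₂ (m₂ + s)) := by
  rw [sum_product, ramanujanSum, ramanujanSum, sum_mul_sum, mul_sum]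
  refine sum_congr rfl fun a₁ _ => ?_
  rw [mul_sum]
  refine sum_congr rfl fun a₂ _ => ?_
  rw [← e_add, ← e_add, ← e_add]
  congr 1
  push_cast
  ring

lemma card_filter_range_le_of_modEq {Q L k₀ : ℕ} (hL : 0 < L) (hLQ : L ∣ Q) (p : ℕ → Prop)
    [DecidablePred p] (h : ∀ k < Q, p k → k ≡ k₀ [MOD L]) :
    #{k ∈ range Q | p k} ≤ Q / L := by
  calc #{k ∈ range Q | p k} ≤ #{k ∈ range Q | k ≡ k₀ [MOD L]} :=
        card_le_card fun k hk => by
          rw [mem_filter, mem_range] at hk ⊢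
          exact ⟨hk.1, h k hk.1 hk.2⟩
    _ = Q / L := by
        rw [← Nat.count_eq_card_filter_range, Nat.count_modEq_card _ hL, Nat.mod_eq_zero_of_dvd hLQ]
        simp

lemma modEq_div_gcd_of_dvd_add_mul {v t : ℕ} (hv : 0 < v) {m : ℤ} {k k₀ : ℕ}
    (h : (v : ℤ) ∣ m + k * t) (h₀ : (v : ℤ) ∣ m + k₀ * t) : k ≡ k₀ [MOD v / v.gcd t] := by
  have hmul : (k : ℤ) * t ≡ k₀ * t [ZMOD v] :=
    Int.modEq_iff_dvd.mpr (by simpa using dvd_sub h₀ h)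
  have := hmul.cancel_right_div_gcd (by exact_mod_cast hv)
  rw [Int.gcd_natCast_natCast, ← Int.natCast_div] at this
  exact Int.natCast_modEq_iff.mp this

lemma natCast_gcd_dvd_of_dvd_add_mul {v t : ℕ} {m : ℤ} {k : ℕ} (h : (v : ℤ) ∣ m + k * t) :
    ((v.gcd t : ℕ) : ℤ) ∣ m :=
  (dvd_add_left (dvd_mul_of_dvd_right (Int.natCast_dvd_natCast.mpr (Nat.gcd_dvd_right v t)) _)).mp
    ((Int.natCast_dvd_natCast.mpr (Nat.gcd_dvd_left v t)).trans h)

lemma card_filter_dvd_add_mul_mul_le {Q v₁ v₂ : ℕ} (hQ : Q ≠ 0) (h₁ : v₁ ∣ Q) (h₂ : v₂ ∣ Q)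
    (t : ℕ) {m₁ m₂ : ℤ} (hm₁ : m₁ ≠ 0) (hm₂ : m₂ ≠ 0) (hne : m₁ ≠ m₂) :
    #{k ∈ range Q | (v₁ : ℤ) ∣ m₁ + (k : ℕ) * t ∧ (v₂ : ℤ) ∣ m₂ + (k : ℕ) * t} * (v₁ * v₂) ≤
      Q * (m₁ * m₂ * (m₁ - m₂)).natAbs := by
  set S := {k ∈ range Q | (v₁ : ℤ) ∣ m₁ + (k : ℕ) * t ∧ (v₂ : ℤ) ∣ m₂ + (k : ℕ) * t}
  rcases S.eq_empty_or_nonempty with hS | ⟨k₀, hk₀⟩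
  · rw [hS, card_empty, zero_mul]
    exact Nat.zero_le _
  obtain ⟨-, hk₀₁, hk₀₂⟩ : k₀ < Q ∧ (v₁ : ℤ) ∣ m₁ + k₀ * t ∧ (v₂ : ℤ) ∣ m₂ + k₀ * t := by
    simpa [S] using hk₀
  have hv₁ : 0 < v₁ := Nat.pos_of_dvd_of_pos h₁ (Nat.pos_of_ne_zero hQ)
  have hv₂ : 0 < v₂ := Nat.pos_of_dvd_of_pos h₂ (Nat.pos_of_ne_zero hQ)
  set g₁ := v₁.gcd t
  set g₂ := v₂.gcd t
  set f₁ := v₁ / g₁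
  set f₂ := v₂ / g₂
  have hLQ : Nat.lcm f₁ f₂ ∣ Q :=
    Nat.lcm_dvd ((Nat.div_dvd_of_dvd (Nat.gcd_dvd_left v₁ t)).trans h₁)
      ((Nat.div_dvd_of_dvd (Nat.gcd_dvd_left v₂ t)).trans h₂)
  have hcard : #S ≤ Q / Nat.lcm f₁ f₂ :=
    card_filter_range_le_of_modEq
      (Nat.pos_of_ne_zero fun h => hQ (Nat.eq_zero_of_zero_dvd (h ▸ hLQ)))
      hLQ _ fun k _ hk => Nat.mod_lcm (modEq_div_gcd_of_dvd_add_mul hv₁ hk.1 hk₀₁)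
        (modEq_div_gcd_of_dvd_add_mul hv₂ hk.2 hk₀₂)
  have hv : v₁ * v₂ = g₁ * g₂ * Nat.gcd f₁ f₂ * Nat.lcm f₁ f₂ := by
    rw [mul_assoc _ (Nat.gcd f₁ f₂), Nat.gcd_mul_lcm]
    nth_rewrite 1 [← Nat.mul_div_cancel' (Nat.gcd_dvd_left v₁ t),
      ← Nat.mul_div_cancel' (Nat.gcd_dvd_left v₂ t)]
    ring
  have hg₁ : g₁ ≤ m₁.natAbs :=
    Int.natAbs_le_of_dvd_ne_zero (natCast_gcd_dvd_of_dvd_add_mul hk₀₁) hm₁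
  have hg₂ : g₂ ≤ m₂.natAbs :=
    Int.natAbs_le_of_dvd_ne_zero (natCast_gcd_dvd_of_dvd_add_mul hk₀₂) hm₂
  have hh : Nat.gcd f₁ f₂ ≤ (m₁ - m₂).natAbs := by
    have hd₁ : ((Nat.gcd f₁ f₂ : ℕ) : ℤ) ∣ m₁ + k₀ * t := Int.natCast_dvd_natCast.mpr
      ((Nat.gcd_dvd_left f₁ f₂).trans (Nat.div_dvd_of_dvd (Nat.gcd_dvd_left v₁ t))) |>.trans hk₀₁
    have hd₂ : ((Nat.gcd f₁ f₂ : ℕ) : ℤ) ∣ m₂ + k₀ * t := Int.natCast_dvd_natCast.mpr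
      ((Nat.gcd_dvd_right f₁ f₂).trans (Nat.div_dvd_of_dvd (Nat.gcd_dvd_left v₂ t))) |>.trans hk₀₂
    exact Int.natAbs_le_of_dvd_ne_zero (by simpa using dvd_sub hd₁ hd₂) (sub_ne_zero.mpr hne)
  calc #S * (v₁ * v₂) = #S * Nat.lcm f₁ f₂ * (g₁ * g₂ * Nat.gcd f₁ f₂) := by rw [hv]; ring
    _ ≤ Q / Nat.lcm f₁ f₂ * Nat.lcm f₁ f₂ * (g₁ * g₂ * Nat.gcd f₁ f₂) := by gcongr
    _ = Q * (g₁ * g₂ * Nat.gcd f₁ f₂) := by rw [Nat.div_mul_cancel hLQ]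
    _ ≤ Q * (m₁.natAbs * m₂.natAbs * (m₁ - m₂).natAbs) := by gcongr
    _ = Q * (m₁ * m₂ * (m₁ - m₂)).natAbs := by rw [Int.natAbs_mul, Int.natAbs_mul]

lemma sum_range_sum_divisors_mul_sum_divisors_le {Q q₁ q₂ : ℕ} (hQ : Q ≠ 0) (h₁ : q₁ ∣ Q)
    (h₂ : q₂ ∣ Q) (t : ℕ) {m₁ m₂ : ℤ} (hm₁ : m₁ ≠ 0) (hm₂ : m₂ ≠ 0) (hne : m₁ ≠ m₂) :
    ∑ k ∈ range Q, (∑ v ∈ q₁.divisors with ((v : ℕ) : ℤ) ∣ m₁ + k * t, (v : ℝ)) *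
        (∑ v ∈ q₂.divisors with ((v : ℕ) : ℤ) ∣ m₂ + k * t, (v : ℝ)) ≤
      q₁.divisors.card * q₂.divisors.card * (Q * (m₁ * m₂ * (m₁ - m₂)).natAbs) := by
  calc ∑ k ∈ range Q, (∑ v ∈ q₁.divisors with ((v : ℕ) : ℤ) ∣ m₁ + k * t, (v : ℝ)) *
        (∑ v ∈ q₂.divisors with ((v : ℕ) : ℤ) ∣ m₂ + k * t, (v : ℝ))
      = ∑ v₁ ∈ q₁.divisors, ∑ v₂ ∈ q₂.divisors,
          ((#{k ∈ range Q | (v₁ : ℤ) ∣ m₁ + (k : ℕ) * t ∧ (v₂ : ℤ) ∣ m₂ + (k : ℕ) * t} *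
            (v₁ * v₂) : ℕ) : ℝ) := by
        simp_rw [sum_filter, sum_mul_sum, ite_zero_mul_ite_zero]
        rw [sum_comm]
        refine sum_congr rfl fun v₁ _ => ?_
        rw [sum_comm]
        refine sum_congr rfl fun v₂ _ => ?_
        rw [← sum_filter, sum_const, nsmul_eq_mul]
        push_cast
        rfl
    _ ≤ ∑ v₁ ∈ q₁.divisors, ∑ v₂ ∈ q₂.divisors, ((Q * (m₁ * m₂ * (m₁ - m₂)).natAbs : ℕ) : ℝ) := by
        refine sum_le_sum fun v₁ hv₁ => sum_le_sum fun v₂ hv₂ => ?_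
        exact_mod_cast card_filter_dvd_add_mul_mul_le hQ ((Nat.dvd_of_mem_divisors hv₁).trans h₁)
          ((Nat.dvd_of_mem_divisors hv₂).trans h₂) t hm₁ hm₂ hne
    _ = _ := by
        simp only [sum_const, nsmul_eq_mul]
        push_cast
        ring

theorem norm_sum_filter_den_eq_le {m₁ m₂ : ℤ} (hm₁ : m₁ ≠ 0) (hm₂ : m₂ ≠ 0) (hne : m₁ ≠ m₂)
    {r : ℕ} (hr : r ≠ 0) (b : ℤ) {q₁ q₂ q₃ : ℕ} (hq₁ : q₁ ≠ 0) (hq₂ : q₂ ≠ 0) (hq₃ : 0 < q₃) :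
    ‖∑ a ∈ reducedResidues q₁ ×ˢ reducedResidues q₂ with (a.1 / q₁ + a.2 / q₂ - b / r : ℚ).den = q₃,
        e (m₁ * a.1 / q₁ + m₂ * a.2 / q₂)‖ ≤
      (m₁ * m₂ * (m₁ - m₂)).natAbs * (q₁.divisors.card * q₂.divisors.card * q₃.divisors.card) := by
  set Q := r * Nat.lcm q₁ q₂
  have hQ : Q ≠ 0 := mul_ne_zero hr (Nat.lcm_ne_zero hq₁ hq₂)
  rw [sum_filter_den_eq _ _ _ hQ hq₃ fun a _ => den_add_div_sub_div_dvd _ _ _ _ _ _]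
  simp_rw [sum_product_e_mul_e]
  calc _ ≤ (Q : ℝ)⁻¹ * ∑ t ∈ q₃.divisors, ∑ k ∈ range Q,
          (∑ v ∈ q₁.divisors with ((v : ℕ) : ℤ) ∣ m₁ + k * t, (v : ℝ)) *
            (∑ v ∈ q₂.divisors with ((v : ℕ) : ℤ) ∣ m₂ + k * t, (v : ℝ)) := by
        rw [norm_mul, norm_inv, Complex.norm_natCast]
        gcongr
        refine (norm_sum_le _ _).trans (sum_le_sum fun t _ => ?_)
        rw [norm_mul]
        refine (mul_le_of_le_one_left (norm_nonneg _) (norm_moebius_le_one _)).trans ?_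
        refine (norm_sum_le _ _).trans (sum_le_sum fun k _ => ?_)
        rw [norm_mul, norm_e, one_mul, norm_mul]
        exact mul_le_mul (norm_ramanujanSum_le hq₁ _) (norm_ramanujanSum_le hq₂ _) (norm_nonneg _)
          (sum_nonneg fun v _ => Nat.cast_nonneg v)
    _ ≤ (Q : ℝ)⁻¹ * ∑ t ∈ q₃.divisors,
          (q₁.divisors.card : ℝ) * q₂.divisors.card * (Q * (m₁ * m₂ * (m₁ - m₂)).natAbs) := by
        refine mul_le_mul_of_nonneg_left (sum_le_sum fun t _ => ?_) (by positivity)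
        exact sum_range_sum_divisors_mul_sum_divisors_le hQ
          ((Nat.dvd_lcm_left q₁ q₂).trans (dvd_mul_left _ _))
          ((Nat.dvd_lcm_right q₁ q₂).trans (dvd_mul_left _ _)) t hm₁ hm₂ hne
    _ = _ := by
        have : (Q : ℝ) ≠ 0 := by exact_mod_cast hQ
        rw [sum_const, nsmul_eq_mul]
        field_simp

theorem cor11_general (m₁ m₂ : ℤ) (hm₁ : m₁ ≠ 0) (hm₂ : m₂ ≠ 0) (hne : m₁ ≠ m₂)
    (r : ℕ) (hr : 0 < r) (b : ℤ)
    (q₁ q₂ : ℕ)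
    (q₃ : ℕ) :
    ‖∑ a ∈ (Finset.Icc 1 q₁ ×ˢ Finset.Icc 1 q₂).filter
          (fun a => Nat.gcd a.1 q₁ = 1 ∧ Nat.gcd a.2 q₂ = 1 ∧
            ((a.1 : ℚ) / (q₁ : ℚ) + (a.2 : ℚ) / (q₂ : ℚ) - (b : ℚ) / (r : ℚ)).den = q₃),
        e ((m₁ : ℝ) * (a.1 : ℝ) / q₁ + (m₂ : ℝ) * (a.2 : ℝ) / q₂)‖ ≤
      ((m₁ * m₂ * (m₁ - m₂)).natAbs : ℝ) *
        ((r * Nat.lcm q₁ q₂).divisors.card : ℝ) ^ 3 := by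
  set S := (Finset.Icc 1 q₁ ×ˢ Finset.Icc 1 q₂).filter
    (fun a => Nat.gcd a.1 q₁ = 1 ∧ Nat.gcd a.2 q₂ = 1 ∧
      ((a.1 : ℚ) / (q₁ : ℚ) + (a.2 : ℚ) / (q₂ : ℚ) - (b : ℚ) / (r : ℚ)).den = q₃)
  rcases S.eq_empty_or_nonempty with hS | ⟨a, ha⟩
  · rw [hS, sum_empty, norm_zero]
    positivity
  simp only [S, mem_filter, mem_product, mem_Icc] at ha
  obtain ⟨⟨⟨ha₁, ha₁q⟩, ha₂, ha₂q⟩, -, -, hden⟩ := ha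
  have hS : S = {a ∈ reducedResidues q₁ ×ˢ reducedResidues q₂ |
      (a.1 / q₁ + a.2 / q₂ - b / r : ℚ).den = q₃} := by
    ext a
    simp only [S, reducedResidues, mem_filter, mem_product]
    tauto
  have hrL : r * Nat.lcm q₁ q₂ ≠ 0 := mul_ne_zero hr.ne' (Nat.lcm_ne_zero (by omega) (by omega))
  rw [hS]
  refine (norm_sum_filter_den_eq_le hm₁ hm₂ hne hr.ne' b (by omega) (by omega)
    (hden ▸ Rat.den_pos _)).trans ?_
  rw [pow_three']
  gcongr
  · exact (Nat.dvd_lcm_left q₁ q₂).trans (dvd_mul_left _ _)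
  · exact (Nat.dvd_lcm_right q₁ q₂).trans (dvd_mul_left _ _)
  · exact hden ▸ den_add_div_sub_div_dvd _ _ _ _ _ _

/-- Corollary 9.3: for distinct nonzero integers `m₁, m₂`, `b` coprime to `r`, squarefree
`q₁, q₂` and any positive `q₃`, the exponential sum over pairs `(a₁, a₂)` of reduced
residues with `denom(a₁/q₁ + a₂/q₂ - b/r) = q₃` is at most
`|m₁ m₂ (m₁ - m₂)| · τ(r·lcm(q₁,q₂))³`. The denominator of a rational `x` (mod 1) is the
least positive integer `D` with `D·x ∈ ℤ`, i.e. `Rat.den`. -/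
theorem cor11 (m₁ m₂ : ℤ) (hm₁ : m₁ ≠ 0) (hm₂ : m₂ ≠ 0) (hne : m₁ ≠ m₂)
    (r : ℕ) (hr : 0 < r) (b : ℤ) (hb : Int.gcd b (r : ℤ) = 1)
    (q₁ q₂ : ℕ) (hq₁ : Squarefree q₁) (hq₂ : Squarefree q₂)
    (q₃ : ℕ) (hq₃ : 0 < q₃) :
    ‖∑ a ∈ (Finset.Icc 1 q₁ ×ˢ Finset.Icc 1 q₂).filter
          (fun a => Nat.gcd a.1 q₁ = 1 ∧ Nat.gcd a.2 q₂ = 1 ∧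
            ((a.1 : ℚ) / (q₁ : ℚ) + (a.2 : ℚ) / (q₂ : ℚ) - (b : ℚ) / (r : ℚ)).den = q₃),
        e ((m₁ : ℝ) * (a.1 : ℝ) / q₁ + (m₂ : ℝ) * (a.2 : ℝ) / q₂)‖ ≤
      ((m₁ * m₂ * (m₁ - m₂)).natAbs : ℝ) *
        ((r * Nat.lcm q₁ q₂).divisors.card : ℝ) ^ 3 :=
  cor11_general m₁ m₂ hm₁ hm₂ hne r hr b q₁ q₂ q₃
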